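/- arXiv:1707.06528 — 5 statements merged into one kernel-verified Lean document; each statement's English description precedes it below -/
import Mathlib

section
/- Let F be a field, let f ∈ F[A_0, ..., A_n] be a homogeneous polynomial, and suppose the monomial A_0^{i_0} A_1^{i_1} ⋯ A_n^{i_n} appears in f with a nonzero coefficient, where i_0 + ... + i_n equals the degree of f. If S_0, ..., S_n ⊆ F satisfy |S_j| > i_j for all 0 ≤ j ≤ n, then there exist a_0 ∈ S_0, ..., a_n ∈ S_n with f(a_0, ..., a_n) ≠ 0. -/
open MvPolynomial

/-- **Combinatorial Nullstellensatz, homogeneous case** (Alon; Corollary 2.1 of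
Oppenheim–Shusterman). Let `f ∈ F[A_0, …, A_n]` be homogeneous and suppose the
monomial with exponent vector `t` appears in `f` with nonzero coefficient (so
`∑ t j` is the degree of `f`). If the sets `S j ⊆ F` satisfy `|S j| > t j` for
all `j`, then `f` is nonzero at some point of `S 0 × ⋯ × S n`. -/
theorem combinatorial_nullstellensatz_homogeneous {F : Type*} [Field F] {n : ℕ}
    (f : MvPolynomial (Fin (n + 1)) F) (t : Fin (n + 1) →₀ ℕ)
    (hhom : f.IsHomogeneous (∑ j, t j))
    (hcoeff : f.coeff t ≠ 0)
    (S : Fin (n + 1) → Finset F) (hS : ∀ j, t j < (S j).card) :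
    ∃ a : Fin (n + 1) → F, (∀ j, a j ∈ S j) ∧ eval a f ≠ 0 := by
  have hf : f ≠ 0 := fun h => hcoeff (by simp [h])
  have hdeg : f.totalDegree = t.degree := by
    rw [hhom.totalDegree hf, Finsupp.degree_eq_sum]
  exact combinatorial_nullstellensatz_exists_eval_nonzero f t hcoeff hdeg S hS
end

section
/- For n ≥ 3, the discriminant of the trinomial A_1 + A_{n-1} T^{n-2} + A_n T^{n-1} with respect to T equals, up to sign, A_1^{n-3} ((n-1)^{n-1} A_1 A_n^{n-2} ± (n-2)^{n-2} A_{n-1}^{n-1}). -/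
open Polynomial

/-- The Sylvester matrix of two polynomials `f`, `g` (with respect to their
natural degrees): the first `g.natDegree` rows carry the coefficients of `f`,
the remaining `f.natDegree` rows carry the coefficients of `g`. -/
noncomputable def sylvester {R : Type*} [CommRing R] (f g : R[X]) :
    Matrix (Fin (f.natDegree + g.natDegree)) (Fin (f.natDegree + g.natDegree)) R :=
  Matrix.of fun i j =>
    if (i : ℕ) < g.natDegree then
      (if (i : ℕ) ≤ (j : ℕ) ∧ (j : ℕ) ≤ (i : ℕ) + f.natDegree then
        f.coeff (f.natDegree + (i : ℕ) - (j : ℕ)) else 0)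
    else
      (if (i : ℕ) - g.natDegree ≤ (j : ℕ) ∧ (j : ℕ) ≤ ((i : ℕ) - g.natDegree) + g.natDegree then
        g.coeff (g.natDegree + ((i : ℕ) - g.natDegree) - (j : ℕ)) else 0)

/-- The resultant `Res_T(f, g)`, the determinant of the Sylvester matrix. -/
noncomputable def resultant {R : Type*} [CommRing R] (f g : R[X]) : R :=
  (_root_.sylvester f g).det

/-- `IsDiscOf f D` says `D` is the discriminant of `f`, characterized (without
division) by `lc(f) · D = (-1)^(n(n-1)/2) · Res_T(f, f')` where `n = deg f`.
Over an integral domain with `lc(f) ≠ 0` this determines `D` uniquely. -/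
def IsDiscOf {R : Type*} [CommRing R] (f : R[X]) (D : R) : Prop :=
  f.leadingCoeff * D =
    (-1) ^ (f.natDegree * (f.natDegree - 1) / 2) * _root_.resultant f (derivative f)

/-- The discriminant of a polynomial over a field:
`Disc_T(f) = (-1)^(n(n-1)/2) · Res_T(f, f') / lc(f)`. -/
noncomputable def disc {F : Type*} [Field F] (f : F[X]) : F :=
  ((-1) ^ (f.natDegree * (f.natDegree - 1) / 2) * _root_.resultant f (derivative f)) / f.leadingCoeff

/-! For `f = a + b T^(k+1) + c T^(k+2)` the derivative factors as `T^k ((k+2) c T + (k+1) b)`.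
Multiplicativity of the resultant splits `Res(f, f')` into `Res(f, T^k) = ± a^k` and the resultant
against the linear factor `p T + q`, which is the homogenised value `± p^(k+2) f(-q/p)`; the signs
cancel and the product simplifies to `c a^k ((k+2)^(k+2) a c^(k+1) + (-(k+1))^(k+1) b^(k+2))`.
Cancelling the leading coefficient `c` yields `D`. -/

theorem sylvester_eq_submatrix_rev_transpose {R : Type*} [CommRing R] (f g : R[X]) :
    _root_.sylvester f g =
      (Polynomial.sylvester f g f.natDegree g.natDegree).transpose.submatrix Fin.rev Fin.rev := by
  ext i j
  rw [← Fin.rev_rev i]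
  generalize Fin.rev i = c
  induction c using Fin.addCases with
  | left c =>
    simp only [_root_.sylvester, Polynomial.sylvester, Matrix.of_apply, Matrix.submatrix_apply,
      Matrix.transpose_apply, Fin.rev_rev, Fin.addCases_left, Fin.val_rev, Fin.val_castAdd,
      Set.mem_Icc]
    split_ifs <;> first | rfl | omega | (congr 1; omega)
  | right c =>
    simp only [_root_.sylvester, Polynomial.sylvester, Matrix.of_apply, Matrix.submatrix_apply,
      Matrix.transpose_apply, Fin.rev_rev, Fin.addCases_right, Fin.val_rev, Fin.val_natAdd,
      Set.mem_Icc]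
    split_ifs <;> first | rfl | omega | (congr 1; omega)

theorem resultant_eq_polynomial_resultant {R : Type*} [CommRing R] (f g : R[X]) :
    _root_.resultant f g = Polynomial.resultant f g := by
  rw [_root_.resultant, sylvester_eq_submatrix_rev_transpose]
  exact (Matrix.det_submatrix_equiv_self Fin.revPerm _).trans (Matrix.det_transpose _)

namespace Polynomial

theorem resultant_C_mul_X_add_C_right {R : Type*} [CommRing R] [IsDomain R] (f : R[X]) {m : ℕ}
    (hf : f.natDegree ≤ m) {p : R} (hp : p ≠ 0) (q : R) :
    f.resultant (C p * X + C q) m 1 =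
      (-1) ^ m * ∑ i ∈ Finset.range (m + 1), f.coeff i * (-q) ^ i * p ^ (m - i) := by
  set φ := algebraMap R (FractionRing R)
  have hφ : Function.Injective φ := FaithfulSMul.algebraMap_injective R (FractionRing R)
  have hp' : φ p ≠ 0 := (map_ne_zero_iff _ hφ).mpr hp
  have hlinear : (C p * X + C q).map φ = C (φ p) * (X + C (φ q / φ p)) := by
    rw [mul_add, ← C_mul, mul_div_cancel₀ _ hp']
    simp
  have hfK : (f.map φ).natDegree < m + 1 := natDegree_map_le.trans_lt (by omega)
  apply hφ
  rw [← resultant_map_map, hlinear, resultant_C_mul_right,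
    resultant_X_add_C_right _ _ _ (by omega), eval_eq_sum_range' hfK, Finset.mul_sum,
    Finset.mul_sum, map_mul, map_sum, Finset.mul_sum]
  refine Finset.sum_congr rfl fun i hi => ?_
  obtain ⟨j, rfl⟩ : ∃ j, m = i + j := ⟨m - i, by simp at hi; omega⟩
  simp only [coeff_map, map_mul, map_pow, map_neg, map_one, Nat.add_sub_cancel_left, pow_add]
  rw [← neg_div, div_pow]
  field_simp

variable {R : Type*} [CommRing R] (a b c : R) (k : ℕ)

theorem derivative_trinomial_zero :
    derivative (trinomial 0 (k + 1) (k + 2) a b c) =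
      X ^ k * (C ((k + 2 : ℕ) * c) * X + C ((k + 1 : ℕ) * b)) := by
  rw [trinomial_def, derivative_add, derivative_add, derivative_C_mul_X_pow,
    derivative_C_mul_X_pow, derivative_C_mul_X_pow]
  simp only [C_mul, map_natCast, Nat.cast_zero, mul_zero, map_zero, zero_mul, zero_add,
    Nat.add_sub_cancel, show k + 2 - 1 = k + 1 from rfl]
  ring

theorem resultant_trinomial_zero_derivative [IsDomain R] [CharZero R] (hc : c ≠ 0) :
    (trinomial 0 (k + 1) (k + 2) a b c).resultant
        (derivative (trinomial 0 (k + 1) (k + 2) a b c)) =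
      c * a ^ k * ((k + 2 : ℕ) ^ (k + 2) * a * c ^ (k + 1) +
        (-(k + 1 : ℕ)) ^ (k + 1) * b ^ (k + 2)) := by
  have hp : ((k + 2 : ℕ) : R) * c ≠ 0 := mul_ne_zero (Nat.cast_ne_zero.mpr (by omega)) hc
  have hL : (C ((k + 2 : ℕ) * c) * X + C ((k + 1 : ℕ) * b)).natDegree = 1 := natDegree_linear hp
  have hL0 : C ((k + 2 : ℕ) * c) * X + C ((k + 1 : ℕ) * b) ≠ 0 :=
    ne_zero_of_natDegree_gt (n := 0) (by omega)
  have hdeg : (trinomial 0 (k + 1) (k + 2) a b c).natDegree = k + 2 :=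
    trinomial_natDegree (by omega) (by omega) hc
  rw [derivative_trinomial_zero, natDegree_mul (pow_ne_zero _ X_ne_zero) hL0,
    resultant_mul_right _ _ _ _ le_rfl, natDegree_X_pow, hL, hdeg,
    resultant_X_pow_right _ _ _ hdeg.le, resultant_C_mul_X_add_C_right _ hdeg.le hp]
  have hsign (x : R) : (-1) ^ ((k + 2) * k) * a ^ k * ((-1) ^ (k + 2) * x) = a ^ k * x := by
    have h : (-1 : R) ^ ((k + 2) * k) * (-1) ^ (k + 2) = 1 := by
      rw [← pow_add, show (k + 2) * k + (k + 2) = (k + 1) * (k + 2) by ring,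
        (Nat.even_mul_succ_self (k + 1)).neg_one_pow]
    linear_combination (a ^ k * x) * h
  have hgap : ∀ i ∈ Finset.range k, (trinomial 0 (k + 1) (k + 2) a b c).coeff (i + 1) = 0 := by
    intro i hi
    simp only [Finset.mem_range] at hi
    simp only [trinomial_def, coeff_add, coeff_C_mul_X_pow]
    split_ifs <;> first | omega | contradiction | simp
  rw [Finset.sum_range_succ, Finset.sum_range_succ, Finset.sum_range_succ',
    Finset.sum_eq_zero fun i hi => by rw [hgap i hi, zero_mul, zero_mul],
    trinomial_trailing_coeff' (by omega) (by omega), trinomial_middle_coeff (by omega) (by omega),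
    trinomial_leading_coeff' (by omega) (by omega), Nat.sub_zero, Nat.sub_self,
    show k + 2 - (k + 1) = 1 by omega, hsign]
  push_cast
  simp only [neg_mul_eq_neg_mul, mul_pow]
  ring

end Polynomial

theorem IsDiscOf.trinomial_zero_eq {R : Type*} [CommRing R] [IsDomain R] [CharZero R]
    {a b c D : R} {k : ℕ} (hc : c ≠ 0) (hD : IsDiscOf (trinomial 0 (k + 1) (k + 2) a b c) D) :
    D = (-1) ^ ((k + 2) * (k + 1) / 2) * a ^ k *
      ((k + 2 : ℕ) ^ (k + 2) * a * c ^ (k + 1) + (-(k + 1 : ℕ)) ^ (k + 1) * b ^ (k + 2)) := by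
  rw [IsDiscOf, trinomial_leadingCoeff (by omega) (by omega) hc,
    trinomial_natDegree (by omega) (by omega) hc, show k + 2 - 1 = k + 1 from rfl,
    resultant_eq_polynomial_resultant, resultant_trinomial_zero_derivative a b c k hc] at hD
  apply mul_left_cancel₀ hc
  rw [hD]
  ring

open MvPolynomial in
/-- For `n ≥ 3` the discriminant of the trinomial
`A_1 + A_{n-1} T^(n-2) + A_n T^(n-1)` equals, up to sign,
`A_1^(n-3) · ((n-1)^(n-1) A_1 A_n^(n-2) ± (n-2)^(n-2) A_{n-1}^(n-1))`. -/
theorem disc_trinomial {n : ℕ} (hn : 3 ≤ n)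
    (D : MvPolynomial (Fin (n + 1)) ℤ)
    (hD : IsDiscOf (Polynomial.C (X 1) +
        Polynomial.C (X ⟨n - 1, by omega⟩) * Polynomial.X ^ (n - 2) +
        Polynomial.C (X ⟨n, by omega⟩) * Polynomial.X ^ (n - 1)) D) :
    ∃ ε δ : ℤ, (ε = 1 ∨ ε = -1) ∧ (δ = 1 ∨ δ = -1) ∧
      D = MvPolynomial.C ε * (X 1) ^ (n - 3) *
        (MvPolynomial.C (((n : ℤ) - 1) ^ (n - 1)) * X 1 * (X ⟨n, by omega⟩) ^ (n - 2) +
         MvPolynomial.C (δ * ((n : ℤ) - 2) ^ (n - 2)) * (X ⟨n - 1, by omega⟩) ^ (n - 1)) := by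
  obtain ⟨k, rfl⟩ : ∃ k, n = k + 3 := ⟨n - 3, by omega⟩
  have htri : IsDiscOf (trinomial 0 (k + 1) (k + 2)
      (X 1 : MvPolynomial (Fin (k + 4)) ℤ) (X ⟨k + 2, by omega⟩) (X ⟨k + 3, by omega⟩)) D := by
    simpa [trinomial_def] using hD
  refine ⟨_, _, neg_one_pow_eq_or ℤ ((k + 2) * (k + 1) / 2), neg_one_pow_eq_or ℤ (k + 1), ?_⟩
  have hn1 : ((k + 3 : ℕ) : ℤ) - 1 = (k + 2 : ℕ) := by push_cast; ring
  have hn2 : ((k + 3 : ℕ) : ℤ) - 2 = (k + 1 : ℕ) := by push_cast; ring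
  rw [htri.trinomial_zero_eq (X_ne_zero _), hn1, hn2]
  simp only [show k + 3 - 1 = k + 2 from rfl, show k + 3 - 2 = k + 1 from rfl,
    show k + 3 - 3 = k from rfl, map_mul, map_pow, map_neg, map_one, map_natCast]
  ring
end

section
/- Fix an integer n > 1. For each finite field F, choose subsets S_0(F), ..., S_n(F) ⊆ F all of the same cardinality C(F), and suppose C(F) → ∞ as |F| → ∞. Then the proportion of tuples (a_0, ..., a_n) ∈ S_0(F) × ... × S_n(F) for which a_0 + a_1 T + ... + a_n T^n is squarefree in F[T] tends to 1 as |F| → ∞. -/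
open Polynomial Finset
open scoped Classical


private lemma exists_double_root {F : Type} [Field F] (f : F[X]) (hf : f ≠ 0)
    (hsf : ¬ Squarefree f) :
    ∃ x : AlgebraicClosure F,
      (f.map (algebraMap F (AlgebraicClosure F))).eval x = 0 ∧
      ((derivative f).map (algebraMap F (AlgebraicClosure F))).eval x = 0 := by
  rw [Squarefree] at hsf
  push_neg at hsf
  obtain ⟨b, hdvd, hbu⟩ := hsf
  have hb0 : b ≠ 0 := by rintro rfl; exact hf (zero_dvd_iff.mp (by simpa using hdvd))
  have hbf : b ∣ f := dvd_trans (dvd_mul_right b b) hdvd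
  have hbf' : b ∣ derivative f := by
    obtain ⟨c, rfl⟩ := hdvd
    rw [derivative_mul, derivative_mul]
    exact dvd_add ((dvd_add (dvd_mul_left b _) (dvd_mul_right b _)).mul_right c)
      ((dvd_mul_right b b).mul_right _)
  set K := AlgebraicClosure F
  set φ := algebraMap F K
  have hdb : (b.map φ).degree ≠ 0 := by
    rw [Polynomial.degree_map]
    exact fun h => hbu (Polynomial.isUnit_iff_degree_eq_zero.mpr h)
  obtain ⟨x, hx⟩ := IsAlgClosed.exists_root (b.map φ) hdb
  exact ⟨x, hx.dvd (Polynomial.map_dvd φ hbf), hx.dvd (Polynomial.map_dvd φ hbf')⟩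

/-- **Corollary 1.4 of Oppenheim–Shusterman.** Fix `n > 1`. For finite fields
`F` equipped with subsets `S 0, …, S n ⊆ F` all of cardinality `C`, the
proportion of tuples `(a_0, …, a_n)` in the box `S 0 × ⋯ × S n` whose
polynomial `∑ a_i T^i` is squarefree tends to `1` as `|F| → ∞` (with
`C = C(F) → ∞`): for every `ε > 0` there is a threshold `N` such that whenever
`|F| ≥ N` and `C ≥ N` the proportion is at least `1 - ε`. -/
theorem squarefree_density_in_cubes {n : ℕ} (hn : 1 < n) :
    ∀ ε : ℝ, 0 < ε → ∃ N : ℕ,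
      ∀ (F : Type) [Field F] [Fintype F] (S : Fin (n + 1) → Finset F) (C : ℕ),
        (∀ i, (S i).card = C) → N ≤ Fintype.card F → N ≤ C →
        (1 - ε) * ((Fintype.piFinset S).card : ℝ) ≤
          (((Fintype.piFinset S).filter (fun a : Fin (n + 1) → F =>
            Squarefree (∑ i : Fin (n + 1), Polynomial.C (a i) * X ^ (i : ℕ)))).card : ℝ) := by
  intro ε hε
  refine ⟨max 1 ⌈(n + 1 : ℝ) / ε⌉₊, ?_⟩
  intro F _ _ S C hC hF hCN
  set K := AlgebraicClosure F with hK
  set φ := algebraMap F K with hφ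
  set f : (Fin (n+1) → F) → F[X] :=
    fun a => ∑ i : Fin (n+1), Polynomial.C (a i) * X ^ (i : ℕ) with hfdef
  set box := Fintype.piFinset S with hbox
  have hboxcard : box.card = C ^ (n+1) := by
    rw [hbox, Fintype.card_piFinset]
    simp [hC, Finset.prod_const]
  set bad := box.filter (fun a => ¬ Squarefree (f a)) with hbad
  set good := box.filter (fun a => Squarefree (f a)) with hgood
  have hcoeff : ∀ (a : Fin (n+1) → F) (k : Fin (n+1)), (f a).coeff (k : ℕ) = a k := by
    intro a k
    rw [hfdef]
    simp only [Polynomial.finset_sum_coeff, Polynomial.coeff_C_mul, Polynomial.coeff_X_pow]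
    rw [Finset.sum_eq_single k]
    · simp
    · intro i _ hik
      have : (k : ℕ) ≠ (i : ℕ) := fun h => hik (Fin.val_injective h).symm
      simp [this]
    · simp
  set one : Fin (n+1) := ⟨1, by omega⟩ with hone
  set B2 := box.filter (fun a => a one = 0) with hB2def
  set B3 := box.filter (fun a => derivative (f a) ≠ 0 ∧ ¬ Squarefree (f a)) with hB3def
  have hsub : bad ⊆ B2 ∪ B3 := by
    intro a ha
    rw [hbad, mem_filter] at ha
    rw [mem_union, hB2def, hB3def, mem_filter, mem_filter]
    by_cases hd : derivative (f a) = 0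
    · left
      refine ⟨ha.1, ?_⟩
      have h1 : (derivative (f a)).coeff 0 = 0 := by rw [hd]; simp
      rw [Polynomial.coeff_derivative] at h1
      have : (f a).coeff 1 = 0 := by simpa using h1
      have h2 := hcoeff a one
      rw [hone] at h2
      simp only at h2
      rw [← h2]
      exact this
    · exact Or.inr ⟨ha.1, hd, ha.2⟩

  have hB2 : B2.card ≤ C ^ n := by
    have hsub2 : B2 ⊆ Fintype.piFinset (Function.update S one {0}) := by
      intro a ha
      rw [hB2def, mem_filter] at ha
      rw [Fintype.mem_piFinset]
      intro i
      rcases eq_or_ne i one with rfl | hi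
      · rw [Function.update_self]
        simp [ha.2]
      · rw [Function.update_of_ne hi]
        exact Fintype.mem_piFinset.mp ha.1 i
    calc B2.card ≤ (Fintype.piFinset (Function.update S one {0})).card :=
          card_le_card hsub2
      _ = ∏ i, ((Function.update S one ({0} : Finset F) i).card) := Fintype.card_piFinset _
      _ = ∏ i, (Function.update (fun j => (S j).card) one ({0} : Finset F).card i) := by
          apply Finset.prod_congr rfl
          intro i _
          exact (Function.apply_update (fun _ s => Finset.card s) S one {0} i)
      _ = ({0} : Finset F).card * ∏ i ∈ (Finset.univ \ {one}), (S i).card :=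
          Finset.prod_update_of_mem (mem_univ one) _ _
      _ ≤ C ^ n := by
          rw [Finset.sdiff_singleton_eq_erase]
          simp only [Finset.card_singleton, one_mul, hC, Finset.prod_const,
            Finset.card_erase_of_mem (mem_univ one), Finset.card_univ, Fintype.card_fin]
          simp
  have hB3 : B3.card ≤ n * C ^ n := by
    set ρ : (Fin (n+1) → F) → (Fin n → F) := fun a i => a i.succ with hρ
    set box' := Fintype.piFinset (fun i : Fin n => S i.succ) with hbox'
    have hmap : ∀ a ∈ B3, ρ a ∈ box' := by
      intro a ha
      rw [Fintype.mem_piFinset]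
      intro i
      exact Fintype.mem_piFinset.mp (mem_filter.mp ha).1 i.succ
    rw [Finset.card_eq_sum_card_fiberwise hmap]
    have hbox'card : box'.card = C ^ n := by
      rw [hbox', Fintype.card_piFinset]
      simp [hC, Finset.prod_const]
    have bound : ∀ r ∈ box', (B3.filter fun a => ρ a = r).card ≤ n := by
      intro r _
      set h : F[X] := ∑ i : Fin n, Polynomial.C (r i) * X ^ ((i : ℕ) + 1) with hh
      have hdecomp : ∀ a, ρ a = r → f a = Polynomial.C (a 0) + h := by
        intro a hra
        rw [hfdef]
        simp only
        rw [Fin.sum_univ_succ]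
        congr 1
        · simp
        · rw [hh]
          apply Finset.sum_congr rfl
          intro i _
          rw [← hra]
          simp [Fin.val_succ, hρ]
      set T : Finset K := (((derivative h).map φ).roots.toFinset).image
        (fun x => - (h.map φ).eval x) with hT
      have hTcard : T.card ≤ n := by
        calc T.card ≤ (((derivative h).map φ).roots.toFinset).card := card_image_le
          _ ≤ Multiset.card (((derivative h).map φ).roots) := Multiset.toFinset_card_le _
          _ ≤ ((derivative h).map φ).natDegree := Polynomial.card_roots' _
          _ ≤ (derivative h).natDegree := Polynomial.natDegree_map_le
          _ ≤ h.natDegree - 1 := Polynomial.natDegree_derivative_le h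
          _ ≤ n := by
              have : h.natDegree ≤ n := by
                rw [hh]
                apply Polynomial.natDegree_sum_le_of_forall_le
                intro i _
                calc (Polynomial.C (r i) * X ^ ((i:ℕ)+1)).natDegree
                    ≤ (X ^ ((i:ℕ)+1) : F[X]).natDegree := Polynomial.natDegree_C_mul_le _ _
                  _ ≤ n := by rw [Polynomial.natDegree_X_pow]; omega
              omega
      have hmem : ∀ a ∈ B3.filter (fun a => ρ a = r), φ (a 0) ∈ T := by
        intro a ha
        rw [mem_filter] at ha
        obtain ⟨haB3, hra⟩ := ha
        rw [hB3def, mem_filter] at haB3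
        obtain ⟨-, hd, hs⟩ := haB3
        have hfa : f a = Polynomial.C (a 0) + h := hdecomp a hra
        have hder : derivative (f a) = derivative h := by
          rw [hfa, derivative_add, derivative_C, zero_add]
        have hd' : derivative h ≠ 0 := hder ▸ hd
        have hf0 : f a ≠ 0 := fun h0 => hd (by rw [h0, derivative_zero])
        obtain ⟨x, hx1, hx2⟩ := exists_double_root (f a) hf0 hs
        rw [hT, mem_image]
        refine ⟨x, ?_, ?_⟩
        · rw [Multiset.mem_toFinset, Polynomial.mem_roots (Polynomial.map_ne_zero hd')]
          rw [Polynomial.IsRoot, ← hder]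
          exact hx2
        · have : ((f a).map φ).eval x = φ (a 0) + (h.map φ).eval x := by
            rw [hfa, Polynomial.map_add, Polynomial.map_C, eval_add, eval_C]
          rw [this] at hx1
          exact neg_eq_of_add_eq_zero_left hx1
      have hinj : Set.InjOn (fun a : Fin (n+1) → F => φ (a 0)) ↑(B3.filter (fun a => ρ a = r)) := by
        intro a ha a' ha' heq
        have h0 : a 0 = a' 0 := RingHom.injective φ heq
        have hra : ρ a = r := (mem_filter.mp ha).2
        have hra' : ρ a' = r := (mem_filter.mp ha').2
        funext i
        refine Fin.cases h0 (fun j => ?_) i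
        have := congrFun (hra.trans hra'.symm) j
        simpa [hρ] using this
      calc (B3.filter fun a => ρ a = r).card ≤ T.card :=
            Finset.card_le_card_of_injOn (fun a => φ (a 0)) hmem hinj
        _ ≤ n := hTcard
    calc ∑ r ∈ box', (B3.filter fun a => ρ a = r).card ≤ ∑ r ∈ box', n :=
          Finset.sum_le_sum bound
      _ = box'.card * n := by rw [Finset.sum_const, smul_eq_mul]
      _ = n * C ^ n := by rw [hbox'card]; ring
  have hbadcard : bad.card ≤ (n+1) * C ^ n := by
    calc bad.card ≤ (B2 ∪ B3).card := card_le_card hsub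
      _ ≤ B2.card + B3.card := card_union_le _ _
      _ ≤ C ^ n + n * C ^ n := Nat.add_le_add hB2 hB3
      _ = (n+1) * C ^ n := by ring
  -- arithmetic finish
  have hceil : (⌈(n + 1 : ℝ) / ε⌉₊ : ℕ) ≤ C := le_trans (le_max_right _ _) hCN
  have hεC : (n + 1 : ℝ) ≤ ε * C := by
    have h1 : ((n:ℝ) + 1) / ε ≤ (C : ℝ) := by
      calc ((n:ℝ) + 1) / ε ≤ (⌈(n + 1 : ℝ) / ε⌉₊ : ℝ) := by
            have := Nat.le_ceil ((n + 1 : ℝ) / ε); push_cast at this ⊢; linarith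
        _ ≤ (C : ℝ) := by exact_mod_cast hceil
    rw [div_le_iff₀ hε] at h1
    linarith
  have hbadR : (bad.card : ℝ) ≤ ε * (C:ℝ) ^ (n+1) := by
    calc (bad.card : ℝ) ≤ ((n+1) * C ^ n : ℕ) := by exact_mod_cast hbadcard
      _ = ((n:ℝ) + 1) * (C:ℝ) ^ n := by push_cast; ring
      _ ≤ (ε * C) * (C:ℝ) ^ n := by
          apply mul_le_mul_of_nonneg_right hεC (by positivity)
      _ = ε * (C:ℝ) ^ (n+1) := by ring
  have hsplit : good.card + bad.card = box.card := by
    rw [hgood, hbad]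
    exact Finset.card_filter_add_card_filter_not _
  have hgoodR : (good.card : ℝ) = (box.card : ℝ) - bad.card := by
    have := hsplit
    push_cast [← this]
    ring
  have hboxR : (box.card : ℝ) = (C:ℝ) ^ (n+1) := by rw [hboxcard]; push_cast; ring
  show (1 - ε) * (box.card : ℝ) ≤ (good.card : ℝ)
  rw [hgoodR, hboxR]
  nlinarith [hbadR, pow_nonneg (Nat.cast_nonneg C : (0:ℝ) ≤ C) (n+1)]
end

section
/- Let n ≥ 1 and let H be an (n+1)-partite (n+1)-uniform hypergraph with parts V_0, ..., V_n each of size C, such that H contains no complete (n+1)-partite subhypergraph K^{(n+1)}(3, ..., 3) (i.e., there are no 3-element subsets T_i ⊆ V_i, 0 ≤ i ≤ n, with every transversal {t_0, ..., t_n}, t_i ∈ T_i, an edge). Then for C sufficiently large, the number of edges of H is at most (2nC)^{n+1 - 3^{-n}}. -/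
/-!
Erdős's induction on the number of parts. In an `(m + 1)`-partite hypergraph, let `N t` be the
set of vertices `v` of the first part such that `(v, t)` is an edge, for `t` in the product `P` of
the other parts. For a 3-set `S` of the first part, the `t` with `S ⊆ N t` form an `m`-partite
hypergraph which is again `K(3, …, 3)`-free, so double counting gives
`∑ₜ C(|N t|, 3) ≤ C(C, 3) · ex_m`. As `C(d, 3) ≥ (d - 2)³ / 6`, the power mean inequality turns
this into `(|E| - 2 |P|)³ ≤ C^(2m+3) · ex_m`. The exponent `x_m = m + 1 - 3^(-m)` is propagated
by `3 x_(m+1) = (2m + 5) + x_m`, and the error term `2 Cᵐ⁺¹` is absorbed once `C ≥ 9`.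
-/

open scoped Classical
open Finset

/-- `E` contains a complete partite `K(3, …, 3)` with parts inside `V`. -/
def ContainsThreeBox {ι α : Type*} [Fintype ι] [DecidableEq ι] (V : ι → Finset α)
    (E : Finset (ι → α)) : Prop :=
  ∃ T : ι → Finset α, (∀ i, T i ⊆ V i ∧ (T i).card = 3) ∧ ∀ t ∈ Fintype.piFinset T, t ∈ E

/-- `ex_m ≤ B`: every `K(3, …, 3)`-free `m`-partite `m`-uniform hypergraph with parts of size
`C` has at most `B` edges. -/
def BoxFreeEdgesLE (m C : ℕ) (B : ℝ) : Prop :=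
  ∀ (α : Type) (V : Fin m → Finset α) (E : Finset (Fin m → α)),
    (∀ i, (V i).card = C) → (∀ e ∈ E, ∀ i, e i ∈ V i) → ¬ ContainsThreeBox V E →
      (E.card : ℝ) ≤ B

theorem boxFreeEdgesLE_one (C : ℕ) : BoxFreeEdgesLE 1 C 2 := by
  intro α V E _ hE hfree
  by_contra! hlarge
  let e := Equiv.funUnique (Fin 1) α
  obtain ⟨S, hS, hS3⟩ : ∃ S ⊆ E.map e.toEmbedding, S.card = 3 :=
    exists_subset_card_eq (by rw [card_map]; exact_mod_cast hlarge)
  refine hfree ⟨fun _ => S, fun i => ⟨fun v hv => ?_, hS3⟩, fun t ht => ?_⟩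
  · obtain ⟨f, hf, rfl⟩ := mem_map.1 (hS hv)
    simpa [e, Subsingleton.elim i 0] using hE f hf 0
  · obtain ⟨f, hf, hft⟩ := mem_map.1 (hS (Fintype.mem_piFinset.1 ht 0))
    exact (e.injective hft : f = t) ▸ hf

theorem sum_choose_card_eq_sum_card_filter_subset {β γ : Type*} {A : Finset β} {P : Finset γ}
    {N : γ → Finset β} (hN : ∀ t ∈ P, N t ⊆ A) (k : ℕ) :
    ∑ t ∈ P, (N t).card.choose k = ∑ S ∈ A.powersetCard k, #{t ∈ P | S ⊆ N t} := by
  calc ∑ t ∈ P, (N t).card.choose k = ∑ t ∈ P, #{S ∈ A.powersetCard k | S ⊆ N t} := by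
        refine sum_congr rfl fun t ht => ?_
        rw [← card_powersetCard]
        congr 1
        ext S
        simp only [mem_powersetCard, mem_filter]
        exact ⟨fun h => ⟨⟨h.1.trans (hN t ht), h.2⟩, h.1⟩, fun h => ⟨h.2, h.1.2⟩⟩
    _ = ∑ S ∈ A.powersetCard k, #{t ∈ P | S ⊆ N t} := by
        simp only [card_filter]
        exact sum_comm

theorem sub_pow_three_le_sum_choose_three {γ : Type*} (P : Finset γ) (d : γ → ℕ) :
    (∑ t ∈ P, (d t : ℝ) - 2 * #P) ^ 3 ≤ 6 * #P ^ 2 * ∑ t ∈ P, ((d t).choose 3 : ℝ) := by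
  let g : γ → ℝ := fun t => ((d t - 2 : ℕ) : ℝ)
  have hg : ∀ t, (d t : ℝ) - 2 ≤ g t := fun t => by
    simp only [g]
    rw [sub_le_iff_le_add]
    exact_mod_cast (le_tsub_add : d t ≤ d t - 2 + 2)
  have hg3 : ∀ t, g t ^ 3 ≤ 6 * ((d t).choose 3 : ℝ) := fun t => by
    have h := Nat.pow_sub_le_descFactorial (d t) 3
    rw [Nat.descFactorial_eq_factorial_mul_choose] at h
    simp only [g]
    exact_mod_cast h
  rcases le_or_gt (∑ t ∈ P, (d t : ℝ) - 2 * #P) 0 with hneg | hpos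
  · exact ((Odd.pow_nonpos_iff (by decide)).2 hneg).trans (by positivity)
  calc (∑ t ∈ P, (d t : ℝ) - 2 * #P) ^ 3 ≤ (∑ t ∈ P, g t) ^ 3 := by
        refine pow_le_pow_left₀ hpos.le ?_ 3
        have := sum_le_sum fun t (_ : t ∈ P) => hg t
        simpa [sum_sub_distrib, mul_comm] using this
    _ ≤ #P ^ 2 * ∑ t ∈ P, g t ^ 3 := pow_sum_le_card_mul_sum_pow (fun t _ => by positivity) 2
    _ ≤ #P ^ 2 * ∑ t ∈ P, 6 * ((d t).choose 3 : ℝ) := by gcongr with t; exact hg3 t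
    _ = 6 * #P ^ 2 * ∑ t ∈ P, ((d t).choose 3 : ℝ) := by rw [← mul_sum]; ring

section Link

variable {α : Type*} {m : ℕ} {V : Fin (m + 1) → Finset α} {E : Finset (Fin (m + 1) → α)}

theorem card_eq_sum_card_cons_mem (hE : ∀ e ∈ E, ∀ i, e i ∈ V i) :
    #E = ∑ t ∈ Fintype.piFinset (Fin.tail V), #{v ∈ V 0 | Fin.cons v t ∈ E} := by
  rw [card_eq_sum_card_fiberwise (f := Fin.tail) fun e he =>
    (Fin.mem_piFinset_iff_zero_tail.1 (Fintype.mem_piFinset.2 (hE e he))).2]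
  refine sum_congr rfl fun t _ => card_nbij' (· 0) (Fin.cons · t) ?_ ?_ ?_ ?_
  · intro e he
    obtain ⟨heE, rfl⟩ := mem_filter.1 he
    simpa [Fin.cons_self_tail, heE] using hE e heE 0
  · intro v hv
    simpa using (mem_filter.1 hv).2
  · intro e he
    obtain ⟨-, rfl⟩ := mem_filter.1 he
    exact Fin.cons_self_tail e
  · intro v _
    rfl

theorem not_containsThreeBox_link (hfree : ¬ ContainsThreeBox V E) {S : Finset α}
    (hS : S ⊆ V 0) (hS3 : #S = 3) :
    ¬ ContainsThreeBox (Fin.tail V)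
      {t ∈ Fintype.piFinset (Fin.tail V) | S ⊆ {v ∈ V 0 | Fin.cons v t ∈ E}} := by
  rintro ⟨T, hT, hTE⟩
  refine hfree ⟨Fin.cons S T, Fin.cases ⟨hS, hS3⟩ hT, fun u hu => ?_⟩
  rw [Fin.mem_piFinset_iff_zero_tail] at hu
  simpa using (mem_filter.1 ((mem_filter.1 (hTE _ hu.2)).2 hu.1)).2

end Link

theorem BoxFreeEdgesLE.mono {m C : ℕ} {B B' : ℝ} (h : BoxFreeEdgesLE m C B) (hBB' : B ≤ B') :
    BoxFreeEdgesLE m C B' :=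
  fun α V E hV hE hfree => (h α V E hV hE hfree).trans hBB'

theorem BoxFreeEdgesLE.succ {m C : ℕ} {B b : ℝ} (h : BoxFreeEdgesLE m C B) (hB : 0 ≤ B)
    (hBb : (C : ℝ) ^ (2 * m + 3) * B ≤ b ^ 3) :
    BoxFreeEdgesLE (m + 1) C (2 * C ^ m + b) := by
  intro α V E hV hE hfree
  set P := Fintype.piFinset (Fin.tail V)
  set N : (Fin m → α) → Finset α := fun t => {v ∈ V 0 | Fin.cons v t ∈ E}
  have hP : (#P : ℝ) = C ^ m := by simp [P, Fintype.card_piFinset, Fin.tail, hV]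
  have hlink : ∀ S ∈ (V 0).powersetCard 3, (#{t ∈ P | S ⊆ N t} : ℝ) ≤ B := fun S hS =>
    h α (Fin.tail V) _ (fun i => hV _) (fun t ht => Fintype.mem_piFinset.1 (mem_filter.1 ht).1)
      (not_containsThreeBox_link hfree (mem_powersetCard.1 hS).1 (mem_powersetCard.1 hS).2)
  have hchoose : ∑ t ∈ P, ((#(N t)).choose 3 : ℝ) ≤ C ^ 3 / 6 * B := calc
    _ = ∑ S ∈ (V 0).powersetCard 3, (#{t ∈ P | S ⊆ N t} : ℝ) := by
        exact_mod_cast sum_choose_card_eq_sum_card_filter_subset (fun t _ => filter_subset _ _) 3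
    _ ≤ #((V 0).powersetCard 3) * B := by
        simpa using sum_le_card_nsmul _ _ _ hlink
    _ ≤ C ^ 3 / 6 * B := by
        rw [card_powersetCard, hV]
        gcongr
        simpa [Nat.factorial] using Nat.choose_le_pow_div (α := ℝ) 3 C
  have hcube : ((#E : ℝ) - 2 * C ^ m) ^ 3 ≤ b ^ 3 := calc
    _ = (∑ t ∈ P, (#(N t) : ℝ) - 2 * #P) ^ 3 := by
        rw [card_eq_sum_card_cons_mem hE, hP]
        push_cast
        rfl
    _ ≤ 6 * #P ^ 2 * ∑ t ∈ P, ((#(N t)).choose 3 : ℝ) :=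
        sub_pow_three_le_sum_choose_three P fun t => #(N t)
    _ ≤ 6 * (C ^ m) ^ 2 * (C ^ 3 / 6 * B) := by
        rw [hP]
        gcongr
    _ = C ^ (2 * m + 3) * B := by ring
    _ ≤ b ^ 3 := hBb
  linarith [(Odd.pow_le_pow (by decide)).1 hcube]

/-- The exponent `x_m` of the bound, for `m + 1` parts. -/
noncomputable def boxExponent (m : ℕ) : ℝ := m + 1 - ((3 : ℝ) ^ m)⁻¹

theorem one_le_boxExponent (m : ℕ) : 1 ≤ boxExponent (m + 1) := by
  have : ((3 : ℝ) ^ (m + 1))⁻¹ ≤ 1 := inv_le_one_of_one_le₀ (one_le_pow₀ (by norm_num))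
  simp only [boxExponent]
  push_cast
  linarith [(m.cast_nonneg : (0 : ℝ) ≤ m)]

theorem rpow_boxExponent_succ_pow_three {c : ℝ} (hc : 0 < c) (m : ℕ) :
    (c ^ boxExponent (m + 1)) ^ 3 = c ^ (2 * m + 5) * c ^ boxExponent m := by
  have hexp : boxExponent (m + 1) * 3 = ((2 * m + 5 : ℕ) : ℝ) + boxExponent m := by
    simp only [boxExponent, pow_succ]
    push_cast
    field_simp
    ring
  rw [← Real.rpow_mul_natCast hc.le, Nat.cast_ofNat, hexp, Real.rpow_add hc, Real.rpow_natCast]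

theorem three_mul_pow_le_rpow_boxExponent {c : ℝ} (hc : 9 ≤ c) (m : ℕ) :
    3 * c ^ (m + 1) ≤ c ^ boxExponent (m + 1) := by
  have hsplit : boxExponent (m + 1) = ((m + 1 : ℕ) : ℝ) + (1 - ((3 : ℝ) ^ (m + 1))⁻¹) := by
    simp only [boxExponent]
    push_cast
    ring
  have hhalf : (1 : ℝ) / 2 ≤ 1 - ((3 : ℝ) ^ (m + 1))⁻¹ := by
    have : ((3 : ℝ) ^ (m + 1))⁻¹ ≤ 3⁻¹ :=
      inv_anti₀ (by norm_num) (le_self_pow₀ (by norm_num) (by omega))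
    linarith
  have hsqrt : 3 ≤ c ^ (1 - ((3 : ℝ) ^ (m + 1))⁻¹) := calc
    (3 : ℝ) = √9 := by rw [show (9 : ℝ) = 3 ^ 2 by norm_num, Real.sqrt_sq (by norm_num)]
    _ ≤ √c := Real.sqrt_le_sqrt hc
    _ = c ^ ((1 : ℝ) / 2) := Real.sqrt_eq_rpow c
    _ ≤ _ := Real.rpow_le_rpow_of_exponent_le (by linarith) hhalf
  rw [hsplit, Real.rpow_add (by linarith), Real.rpow_natCast, mul_comm]
  gcongr

theorem boxFreeEdgesLE_boxExponent (m : ℕ) {C : ℕ} (hC : 9 ≤ C) :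
    BoxFreeEdgesLE (m + 1) C (2 * C ^ boxExponent m) := by
  have hc : (9 : ℝ) ≤ C := by exact_mod_cast hC
  induction m with
  | zero => simpa [boxExponent] using boxFreeEdgesLE_one C
  | succ m ih =>
    -- any `b = λ C ^ x` with `2 ≤ λ³` and `λ ≤ 4 / 3` works
    refine (ih.succ (by positivity) (b := 13 / 10 * C ^ boxExponent (m + 1)) ?_).mono ?_
    · rw [mul_pow, rpow_boxExponent_succ_pow_three (by linarith),
        show 2 * (m + 1) + 3 = 2 * m + 5 by ring]
      have : 0 ≤ (C : ℝ) ^ (2 * m + 5) * C ^ boxExponent m := by positivity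
      nlinarith
    · have : 0 ≤ (C : ℝ) ^ boxExponent (m + 1) := by positivity
      linarith [three_mul_pow_le_rpow_boxExponent hc m]

/-- **Erdős's hypergraph extremal bound** (Kővári–Sós–Turán type, used in the
paper via Erdős's theorem). Let `n ≥ 1`. An `(n+1)`-partite `(n+1)`-uniform
hypergraph is modelled by parts `V 0, …, V n` (each of size `C`) of a vertex
type `α` together with an edge set `E ⊆ V 0 × ⋯ × V n`. If `H` contains no
complete `(n+1)`-partite subhypergraph `K^(n+1)(3, …, 3)` — i.e. there are no
`3`-element subsets `T i ⊆ V i` all of whose transversals are edges — then for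
`C` sufficiently large the number of edges is at most `(2nC)^(n+1-3^(-n))`. -/
theorem hypergraph_extremal_bound {n : ℕ} (hn : 1 ≤ n) :
    ∃ C₀ : ℕ, ∀ C : ℕ, C₀ ≤ C →
      ∀ (α : Type) (V : Fin (n + 1) → Finset α)
        (E : Finset (Fin (n + 1) → α)),
        (∀ i, (V i).card = C) →
        (∀ e ∈ E, ∀ i, e i ∈ V i) →
        (¬ ∃ T : Fin (n + 1) → Finset α,
          (∀ i, T i ⊆ V i ∧ (T i).card = 3) ∧
          ∀ t ∈ Fintype.piFinset T, t ∈ E) →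
        (E.card : ℝ) ≤ ((2 * n * C : ℕ) : ℝ) ^ ((n : ℝ) + 1 - (3 : ℝ) ^ (-(n : ℝ))) := by
  obtain ⟨m, rfl⟩ := Nat.exists_eq_add_of_le' hn
  refine ⟨9, fun C hC α V E hV hE hfree => ?_⟩
  have hexp : ((m + 1 : ℕ) : ℝ) + 1 - (3 : ℝ) ^ (-((m + 1 : ℕ) : ℝ)) = boxExponent (m + 1) := by
    rw [Real.rpow_neg (by norm_num), Real.rpow_natCast, boxExponent]
  have h2n : (2 : ℝ) ≤ ((2 * (m + 1) : ℕ) : ℝ) := by exact_mod_cast (by omega : 2 ≤ 2 * (m + 1))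
  rw [hexp, Nat.cast_mul, Real.mul_rpow (by positivity) (by positivity)]
  calc (#E : ℝ) ≤ 2 * C ^ boxExponent (m + 1) :=
        boxFreeEdgesLE_boxExponent (m + 1) hC α V E hV hE hfree
    _ ≤ ((2 * (m + 1) : ℕ) : ℝ) ^ boxExponent (m + 1) * C ^ boxExponent (m + 1) := by
        gcongr
        exact h2n.trans (Real.self_le_rpow_of_one_le (by linarith) (one_le_boxExponent m))
end

section
/- Let F be a field of characteristic 2 with |F| ≥ 3 (or F infinite), let n ≥ 2, and let a, b ∈ F be distinct nonzero elements. Then there exist c_0, ..., c_{n-1} ∈ {a, b} such that c_0 + c_1 T + ... + c_{n-1} T^{n-1} + a T^n is squarefree in F[T]. -/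
open Polynomial

private lemma key_sf {F : Type*} [Field F] {u : F} (hu : u ≠ 0) {f q : F[X]}
    (h : f = q * derivative f + C u) : Squarefree f := by
  have hsep : f.Separable := by
    refine ⟨C u⁻¹, -(C u⁻¹ * q), ?_⟩
    have : C u⁻¹ * f + -(C u⁻¹ * q) * derivative f
        = C u⁻¹ * (f - q * derivative f) := by ring
    rw [this, show f - q * derivative f = C u by linear_combination h, ← C_mul,
      inv_mul_cancel₀ hu, C_1]
  exact hsep.squarefree

/-- Function-field analog of the Erdős–Mauduit–Sárközy digit problem
(Oppenheim–Shusterman, Theorem 1.2, last part). Let `F` be a field of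
characteristic `2` containing two distinct nonzero elements `a, b` (so `|F| ≥ 3`
or `F` is infinite), and let `n ≥ 2`. Then there exist
`c_0, …, c_{n-1} ∈ {a, b}` such that
`c_0 + c_1 T + ⋯ + c_{n-1} T^(n-1) + a T^n` is squarefree in `F[T]`. -/
theorem squarefree_with_two_digits_char_two {F : Type*} [Field F] [CharP F 2]
    {a b : F} (ha : a ≠ 0) (hb : b ≠ 0) (hab : a ≠ b)
    {n : ℕ} (hn : 2 ≤ n) :
    ∃ c : Fin n → F, (∀ i, c i = a ∨ c i = b) ∧
      Squarefree ((∑ i : Fin n, C (c i) * X ^ (i : ℕ)) + C a * X ^ n) := by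
  set g : F[X] := ∑ i ∈ Finset.range (n + 1), X ^ i with hg
  have hgm : g * (X - 1) = X ^ (n + 1) - 1 := geom_sum_mul X (n + 1)
  rcases Nat.even_or_odd n with he | ho
  · -- n even: all coefficients a
    refine ⟨fun _ => a, fun i => Or.inl rfl, ?_⟩
    have hf : (∑ i : Fin n, C a * X ^ (i : ℕ)) + C a * X ^ n = C a * g := by
      rw [hg, Fin.sum_univ_eq_sum_range (fun i => C a * X ^ i) n,
        Finset.mul_sum, Finset.sum_range_succ]
    rw [hf]
    have hcast : ((n + 1 : ℕ) : F) ≠ 0 := by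
      rw [Nat.cast_add, Nat.cast_one,
        (CharP.cast_eq_zero_iff F 2 n).mpr he.two_dvd, zero_add]
      exact one_ne_zero
    have hsf : Squarefree (X ^ (n + 1) - 1 : F[X]) := by
      have := (separable_X_pow_sub_C (1 : F) hcast one_ne_zero).squarefree
      simpa using this
    refine hsf.squarefree_of_dvd ⟨C a⁻¹ * (X - 1), ?_⟩
    rw [show C a * g * (C a⁻¹ * (X - 1)) = C a * C a⁻¹ * (g * (X - 1)) by ring,
      ← C_mul, mul_inv_cancel₀ ha, C_1, one_mul, hgm]
  · -- n odd: c 0 = b, rest a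
    refine ⟨fun i => if (i : ℕ) = 0 then b else a, fun i => by
      by_cases h : (i : ℕ) = 0 <;> simp [h], ?_⟩
    have hf : (∑ i : Fin n, C (if (i : ℕ) = 0 then b else a) * X ^ (i : ℕ)) + C a * X ^ n
        = C a * g + C (b - a) := by
      rw [Fin.sum_univ_eq_sum_range (fun i => C (if i = 0 then b else a) * X ^ i) n,
        hg, Finset.mul_sum, Finset.sum_range_succ]
      have hsplit : ∑ i ∈ Finset.range n, C (if i = 0 then b else a) * X ^ i
          = (∑ i ∈ Finset.range n, C a * X ^ i) + C (b - a) := by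
        have : ∑ i ∈ Finset.range n, (C (if i = 0 then b else a) * X ^ i - C a * X ^ i)
            = C (b - a) := by
          rw [Finset.sum_eq_single 0]
          · simp
          · intro i _ hi; simp [hi]
          · intro h; exact absurd (Finset.mem_range.mpr (by omega)) h
        have h2 := this
        rw [Finset.sum_sub_distrib] at h2
        linear_combination h2
      rw [hsplit]; ring
    rw [hf]
    -- derivative identity: g = derivative g * (1 - X)
    have hd : derivative g * (X - 1) + g = 0 := by
      have := congrArg derivative hgm
      rw [derivative_mul, derivative_sub, derivative_X, derivative_one,
        derivative_sub, derivative_X_pow, derivative_one] at this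
      have hcast : ((n + 1 : ℕ) : F) = 0 :=
        (CharP.cast_eq_zero_iff F 2 (n + 1)).mpr (by obtain ⟨k, hk⟩ := ho; omega)
      rw [hcast] at this
      simpa using this
    apply key_sf (u := b - a) (sub_ne_zero.mpr (Ne.symm hab)) (q := 1 - X)
    have hdf : derivative (C a * g + C (b - a)) = C a * derivative g := by
      simp
    rw [hdf]
    have hgeq : g = derivative g * (1 - X) := by linear_combination hd
    linear_combination C a * hgeq
end
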